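/- Let G be a D-regular Bonnet-Myers sharp graph of diameter L, let x_0 ~ x_1 ~ ... ~ x_L be a geodesic with x_0 a pole, and for each j let T_j : B_1(x_{j−1}) → B_1(x_j) be a good optimal transport map. Then for every z ∈ B_1(x_0), setting T^j = T_j ∘ ... ∘ T_1, we have d(x_0, z) + Σ_{j=1}^{L} d(T^{j−1}(z), T^j(z)) + d(T^L(z), x_L) = L. -/

import Mathlib

open Finset

namespace BMS

open scoped Classical

variable {V : Type*}

/-- The uniform probability measure on the closed 1-ball of `x` in a `D`-regular graph. -/
noncomputable def mu (G : SimpleGraph V) (D : ℕ) (x : V) : V → ℝ :=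
  fun v => if G.dist x v ≤ 1 then 1 / (D + 1) else 0

/-- The L¹-Wasserstein distance between `μ_x` and `μ_y`, as an infimum over transport plans. -/
noncomputable def W1 (G : SimpleGraph V) [Fintype V] (D : ℕ) (x y : V) : ℝ :=
  sInf { c : ℝ | ∃ π : V → V → ℝ,
    (∀ u v, 0 ≤ π u v) ∧
    (∀ u, ∑ v, π u v = mu G D x u) ∧
    (∀ v, ∑ u, π u v = mu G D y v) ∧
    c = ∑ u, ∑ v, (G.dist u v : ℝ) * π u v }

/-- Ollivier Ricci curvature (Lin–Lu–Yau normalization for regular graphs). -/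
noncomputable def kappa (G : SimpleGraph V) [Fintype V] (D : ℕ) (x y : V) : ℝ :=
  ((D + 1) / D) * (1 - W1 G D x y)

/-- `G` is Bonnet–Myers sharp: the infimum of the curvature over edges equals `2 / L`. -/
def BMSharp (G : SimpleGraph V) [Fintype V] (D L : ℕ) : Prop :=
  sInf { k : ℝ | ∃ x y, G.Adj x y ∧ k = kappa G D x y } = 2 / (L : ℝ)

/-- Number of neighbors of `y` at distance `k` from `x0`. -/
noncomputable def sphDeg (G : SimpleGraph V) [Fintype V] (x0 y : V) (k : ℕ) : ℕ :=
  (Finset.univ.filter (fun v => G.Adj y v ∧ G.dist x0 v = k)).card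

/-- Number of triangles containing the edge `x ~ y` (common neighbors of `x` and `y`). -/
noncomputable def tri (G : SimpleGraph V) [Fintype V] (x y : V) : ℕ :=
  (Finset.univ.filter (fun v => G.Adj x v ∧ G.Adj y v)).card

/-- A good optimal transport map from `B_1(a)` to `B_1(b)`: a bijection between the 1-balls,
fixing exactly the vertices of `B_1(a) ∩ B_1(b)` (among the domain), whose cost realizes
the Wasserstein distance `W1 (μ_a, μ_b)`. -/
def goodMap (G : SimpleGraph V) [Fintype V] (D : ℕ) (a b : V) (T : V → V) : Prop :=
  Set.BijOn T {v | G.dist a v ≤ 1} {v | G.dist b v ≤ 1} ∧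
  (∀ v, G.dist a v ≤ 1 → (T v = v ↔ G.dist b v ≤ 1)) ∧
  (1 / (D + 1 : ℝ)) *
      ∑ v ∈ Finset.univ.filter (fun v => G.dist a v ≤ 1), (G.dist v (T v) : ℝ) =
    W1 G D a b


/-- Composition `T^j = T_{j-1} ∘ ⋯ ∘ T_0` of the transport maps (`iterT T 0 = id`). -/
def iterT (T : ℕ → V → V) : ℕ → V → V
  | 0 => id
  | n + 1 => T n ∘ iterT T n

/-! Every `z ∈ B_1(x_0)` is carried along the path `x_0, z, T^1 z, …, T^L z, x_L`, which is at
least `L` long by the triangle inequality since `d(x_0, x_L) = L`. Summed over the `D + 1`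
points of `B_1(x_0)`, the two end legs contribute `D` each, and since the `T^j` are bijections of
balls the middle legs contribute `(D + 1) W_1(μ_{x_j}, μ_{x_{j+1}})`, which Bonnet–Myers
sharpness bounds by `D + 1 - 2D/L`. The total is thus at most `(D + 1) L`, so no path is longer
than `L`. -/

noncomputable def unitBall (G : SimpleGraph V) [Fintype V] (y : V) : Finset V :=
  {v | G.dist y v ≤ 1}

noncomputable def transportPathLength (G : SimpleGraph V) (x : ℕ → V) (T : ℕ → V → V) (L : ℕ)
    (z : V) : ℕ :=
  G.dist (x 0) z + (∑ j ∈ Finset.range L, G.dist (iterT T j z) (iterT T (j + 1) z))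
    + G.dist (iterT T L z) (x L)

section

variable {G : SimpleGraph V}

lemma dist_le_sum_dist_succ (hconn : G.Connected) (p : ℕ → V) (n : ℕ) :
    G.dist (p 0) (p n) ≤ ∑ j ∈ range n, G.dist (p j) (p (j + 1)) := by
  induction n with
  | zero => simp
  | succ n ih =>
    rw [sum_range_succ]
    exact hconn.dist_triangle.trans (Nat.add_le_add_right ih _)

lemma dist_le_transportPathLength (hconn : G.Connected) (x : ℕ → V) (T : ℕ → V → V) (L : ℕ)
    (z : V) : G.dist (x 0) (x L) ≤ transportPathLength G x T L z := by
  have hmid : G.dist z (iterT T L z) ≤ ∑ j ∈ range L, G.dist (iterT T j z) (iterT T (j + 1) z) :=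
    dist_le_sum_dist_succ hconn (fun j => iterT T j z) L
  have h₁ := hconn.dist_triangle (u := x 0) (v := z) (w := iterT T L z)
  have h₂ := hconn.dist_triangle (u := x 0) (v := iterT T L z) (w := x L)
  unfold transportPathLength
  omega

variable [Fintype V] {D : ℕ}

@[simp]
lemma mem_unitBall {y v : V} : v ∈ unitBall G y ↔ G.dist y v ≤ 1 := by
  simp [unitBall]

lemma unitBall_eq_insert_neighborFinset (hconn : G.Connected) (y : V) :
    unitBall G y = insert y (G.neighborFinset y) := by
  ext v
  rw [mem_unitBall, mem_insert, SimpleGraph.mem_neighborFinset, Nat.le_one_iff_eq_zero_or_eq_one,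
    hconn.dist_eq_zero_iff, SimpleGraph.dist_eq_one_iff_adj, eq_comm]

lemma card_unitBall (hconn : G.Connected) (hreg : G.IsRegularOfDegree D) (y : V) :
    #(unitBall G y) = D + 1 := by
  rw [unitBall_eq_insert_neighborFinset hconn, card_insert_of_notMem (by simp),
    SimpleGraph.card_neighborFinset_eq_degree, hreg y]

lemma sum_dist_unitBall (hconn : G.Connected) (hreg : G.IsRegularOfDegree D) (y : V) :
    ∑ v ∈ unitBall G y, G.dist y v = D := by
  rw [unitBall_eq_insert_neighborFinset hconn, sum_insert (by simp), SimpleGraph.dist_self,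
    sum_congr rfl fun v hv => SimpleGraph.dist_eq_one_iff_adj.mpr (by simpa using hv)]
  simp [SimpleGraph.card_neighborFinset_eq_degree, hreg y]

omit [Fintype V] in
lemma mu_nonneg (D : ℕ) (y v : V) : 0 ≤ mu G D y v := by
  unfold mu; positivity

lemma sum_mu (hconn : G.Connected) (hreg : G.IsRegularOfDegree D) (y : V) :
    ∑ v, mu G D y v = 1 := by
  have hcard := card_unitBall hconn hreg y
  simp only [unitBall] at hcard
  simp only [mu, ← sum_filter, sum_const, hcard, nsmul_eq_mul]
  push_cast
  field_simp

lemma W1_le_diam (hconn : G.Connected) (hreg : G.IsRegularOfDegree D) (x y : V) :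
    W1 G D x y ≤ G.diam := by
  have : Nonempty V := ⟨x⟩
  have hfin : G.ediam ≠ ⊤ := G.connected_iff_ediam_ne_top.mp hconn
  have hprod : ∑ u, ∑ v, (G.dist u v : ℝ) * (mu G D x u * mu G D y v) ≤ G.diam :=
    calc ∑ u, ∑ v, (G.dist u v : ℝ) * (mu G D x u * mu G D y v)
        ≤ ∑ u, ∑ v, (G.diam : ℝ) * (mu G D x u * mu G D y v) := by
          gcongr with u _ v _
          · exact mul_nonneg (mu_nonneg D x u) (mu_nonneg D y v)
          · exact G.dist_le_diam hfin
      _ = G.diam := by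
          simp only [← mul_sum, sum_mu hconn hreg, mul_one]
  unfold W1
  refine le_trans (csInf_le ⟨0, ?_⟩ ⟨fun u v => mu G D x u * mu G D y v, ?_, ?_, ?_, rfl⟩) hprod
  · rintro c ⟨π, hπ, -, -, rfl⟩
    exact sum_nonneg fun u _ => sum_nonneg fun v _ => mul_nonneg (Nat.cast_nonneg _) (hπ u v)
  · exact fun u v => mul_nonneg (mu_nonneg D x u) (mu_nonneg D y v)
  · intro u; rw [← mul_sum, sum_mu hconn hreg, mul_one]
  · intro v; rw [← sum_mul, sum_mu hconn hreg, one_mul]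

lemma kappa_le_of_BMSharp (hconn : G.Connected) (hreg : G.IsRegularOfDegree D) {L : ℕ}
    (hBM : BMSharp G D L) {a b : V} (hab : G.Adj a b) : 2 / (L : ℝ) ≤ kappa G D a b := by
  rw [← hBM]
  refine csInf_le ⟨(D + 1) / D * (1 - G.diam), ?_⟩ ⟨a, b, hab, rfl⟩
  rintro k ⟨u, v, -, rfl⟩
  unfold kappa
  gcongr
  exact W1_le_diam hconn hreg u v

lemma card_mul_W1_le_of_BMSharp (hconn : G.Connected) (hD : 0 < D)
    (hreg : G.IsRegularOfDegree D) {L : ℕ} (hBM : BMSharp G D L) {a b : V}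
    (hab : G.Adj a b) : (D + 1) * W1 G D a b ≤ D + 1 - 2 * D / L := by
  have hk := kappa_le_of_BMSharp hconn hreg hBM hab
  have hD' : (0 : ℝ) < D := by exact_mod_cast hD
  unfold kappa at hk
  have : 2 * D / L ≤ (D + 1) * (1 - W1 G D a b) :=
    calc (2 * D / L : ℝ) = 2 / L * D := by ring
      _ ≤ (D + 1) / D * (1 - W1 G D a b) * D := by gcongr
      _ = (D + 1) * (1 - W1 G D a b) := by field_simp
  linarith

variable {L : ℕ} {x : ℕ → V} {T : ℕ → V → V}

lemma bijOn_iterT (hT : ∀ j < L, goodMap G D (x j) (x (j + 1)) (T j)) {j : ℕ} (hj : j ≤ L) :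
    Set.BijOn (iterT T j) (unitBall G (x 0)) (unitBall G (x j)) := by
  induction j with
  | zero => exact Set.bijOn_id _
  | succ j ih =>
    have hstep := (hT j (by omega)).1
    simp only [unitBall, coe_filter, mem_univ, true_and] at ih ⊢
    exact hstep.comp (ih (by omega))

lemma sum_comp_iterT {M : Type*} [AddCommMonoid M]
    (hT : ∀ j < L, goodMap G D (x j) (x (j + 1)) (T j)) {j : ℕ} (hj : j ≤ L) (f : V → M) :
    ∑ z ∈ unitBall G (x 0), f (iterT T j z) = ∑ v ∈ unitBall G (x j), f v :=
  have hbij := bijOn_iterT hT hj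
  sum_nbij (iterT T j) (fun _ hz => hbij.mapsTo hz) hbij.injOn hbij.surjOn fun _ _ => rfl

lemma sum_dist_iterT_succ (hT : ∀ j < L, goodMap G D (x j) (x (j + 1)) (T j)) {j : ℕ}
    (hj : j < L) :
    ∑ z ∈ unitBall G (x 0), (G.dist (iterT T j z) (iterT T (j + 1) z) : ℝ)
      = (D + 1) * W1 G D (x j) (x (j + 1)) := by
  have hcomp : ∑ z ∈ unitBall G (x 0), (G.dist (iterT T j z) (iterT T (j + 1) z) : ℝ)
      = ∑ v ∈ unitBall G (x j), (G.dist v (T j v) : ℝ) :=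
    sum_comp_iterT hT hj.le fun v => (G.dist v (T j v) : ℝ)
  rw [hcomp, ← (hT j hj).2.2]
  field_simp
  rfl

lemma sum_transportPathLength_le (hconn : G.Connected) (hD : 0 < D) (hL : 0 < L)
    (hreg : G.IsRegularOfDegree D) (hBM : BMSharp G D L) (hadj : ∀ j < L, G.Adj (x j) (x (j + 1)))
    (hT : ∀ j < L, goodMap G D (x j) (x (j + 1)) (T j)) :
    ∑ z ∈ unitBall G (x 0), (transportPathLength G x T L z : ℝ) ≤ (D + 1) * L := by
  have hfirst : ∑ z ∈ unitBall G (x 0), (G.dist (x 0) z : ℝ) = D := by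
    exact_mod_cast sum_dist_unitBall hconn hreg (x 0)
  have hlast : ∑ z ∈ unitBall G (x 0), (G.dist (iterT T L z) (x L) : ℝ) = D := by
    rw [sum_comp_iterT hT le_rfl fun v => (G.dist v (x L) : ℝ)]
    simp_rw [SimpleGraph.dist_comm (u := _) (v := x L)]
    exact_mod_cast sum_dist_unitBall hconn hreg (x L)
  have hmiddle : ∑ z ∈ unitBall G (x 0), ∑ j ∈ range L,
      (G.dist (iterT T j z) (iterT T (j + 1) z) : ℝ) ≤ (D + 1) * L - 2 * D := by
    rw [sum_comm]
    calc _ = ∑ j ∈ range L, (D + 1) * W1 G D (x j) (x (j + 1)) :=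
          sum_congr rfl fun j hj => sum_dist_iterT_succ hT (mem_range.mp hj)
      _ ≤ ∑ j ∈ range L, (D + 1 - 2 * D / L : ℝ) := sum_le_sum fun j hj =>
          card_mul_W1_le_of_BMSharp hconn hD hreg hBM (hadj j (mem_range.mp hj))
      _ = (D + 1) * L - 2 * D := by
          rw [sum_const, card_range, nsmul_eq_mul]
          field_simp
  simp only [transportPathLength, Nat.cast_add, Nat.cast_sum, sum_add_distrib]
  linarith

end

theorem stmt_general [Fintype V] (G : SimpleGraph V) (hconn : G.Connected)
    (D L : ℕ) (hD : 0 < D) (hL : 0 < L) (hreg : G.IsRegularOfDegree D)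
    (hBM : BMSharp G D L)
    (x : ℕ → V)
    (hadj : ∀ j < L, G.Adj (x j) (x (j + 1)))
    (hgeo : G.dist (x 0) (x L) = L)
    (T : ℕ → V → V) (hT : ∀ j < L, goodMap G D (x j) (x (j + 1)) (T j)) :
    ∀ z : V, G.dist (x 0) z ≤ 1 →
      G.dist (x 0) z
        + (∑ j ∈ Finset.range L, G.dist (iterT T j z) (iterT T (j + 1) z))
        + G.dist (iterT T L z) (x L) = L := by
  intro z hz
  have hlower : ∀ w ∈ unitBall G (x 0), L ≤ transportPathLength G x T L w := fun w _ =>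
    hgeo.symm.trans_le (dist_le_transportPathLength hconn x T L w)
  have hupper : ∑ w ∈ unitBall G (x 0), transportPathLength G x T L w
      ≤ ∑ _w ∈ unitBall G (x 0), L := by
    rw [sum_const, card_unitBall hconn hreg, smul_eq_mul]
    exact_mod_cast sum_transportPathLength_le hconn hD hL hreg hBM hadj hT
  exact ((sum_eq_sum_iff_of_le hlower).mp (le_antisymm (sum_le_sum hlower) hupper) z
    (mem_unitBall.mpr hz)).symm

theorem stmt [Fintype V] (G : SimpleGraph V) (hconn : G.Connected)
    (D L : ℕ) (hD : 0 < D) (hL : 0 < L) (hreg : G.IsRegularOfDegree D)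
    (hdiam : G.diam = L) (hBM : BMSharp G D L)
    (x : ℕ → V) (hpole : ∃ p, G.dist (x 0) p = L)
    (hadj : ∀ j < L, G.Adj (x j) (x (j + 1)))
    (hgeo : G.dist (x 0) (x L) = L)
    (T : ℕ → V → V) (hT : ∀ j < L, goodMap G D (x j) (x (j + 1)) (T j)) :
    ∀ z : V, G.dist (x 0) z ≤ 1 →
      G.dist (x 0) z
        + (∑ j ∈ Finset.range L, G.dist (iterT T j z) (iterT T (j + 1) z))
        + G.dist (iterT T L z) (x L) = L :=
  stmt_general G hconn D L hD hL hreg hBM x hadj hgeo T hT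

end BMS
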